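/- Let U, V, P, Z, X, Y be finitely generated right A-modules and let s : U → V, ι : U → P, t : V → Z, π : P → Z, f : X → Y, v : X → U, w : Y → V be homomorphisms such that the sequences 0 → U → V ⊕ P → Z → 0 (first map u ↦ (s(u), ι(u)), second map (v', p) ↦ t(v') + π(p)) and 0 → X → Y ⊕ U → V → 0 (first map x ↦ (f(x), v(x)), second map (y, u) ↦ w(y) + s(u)) are exact. Then the sequence 0 → X → Y ⊕ P → Z → 0 with first map x ↦ (f(x), −ι(v(x))) and second map (y, p) ↦ t(w(y)) + π(p) is exact. Moreover, if both given short exact sequences are perfect exact, then so is this new sequence. -/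

import Mathlib

/-- `0 → X → Y → Z → 0` is a short exact sequence of right `A`-modules
(right `A`-modules are modules over `Aᵐᵒᵖ`). -/
def IsShortExactSeq (A : Type) [Ring A] {X Y Z : Type}
    [AddCommGroup X] [AddCommGroup Y] [AddCommGroup Z]
    [Module Aᵐᵒᵖ X] [Module Aᵐᵒᵖ Y] [Module Aᵐᵒᵖ Z]
    (f : X →ₗ[Aᵐᵒᵖ] Y) (g : Y →ₗ[Aᵐᵒᵖ] Z) : Prop :=
  Function.Injective f ∧ Function.Exact f g ∧ Function.Surjective g

/-- A short exact sequence `0 → X → Y → Z → 0` of right `A`-modules is perfect exact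
if the induced sequence `0 → Hom_A(Z,A) → Hom_A(Y,A) → Hom_A(X,A) → 0` is exact. -/
def IsPerfectExactSeq (A : Type) [Ring A] {X Y Z : Type}
    [AddCommGroup X] [AddCommGroup Y] [AddCommGroup Z]
    [Module Aᵐᵒᵖ X] [Module Aᵐᵒᵖ Y] [Module Aᵐᵒᵖ Z]
    (f : X →ₗ[Aᵐᵒᵖ] Y) (g : Y →ₗ[Aᵐᵒᵖ] Z) : Prop :=
  IsShortExactSeq A f g ∧
  Function.Injective (fun φ : Z →ₗ[Aᵐᵒᵖ] A => φ.comp g) ∧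
  Function.Exact (fun φ : Z →ₗ[Aᵐᵒᵖ] A => φ.comp g) (fun φ : Y →ₗ[Aᵐᵒᵖ] A => φ.comp f) ∧
  Function.Surjective (fun φ : Y →ₗ[Aᵐᵒᵖ] A => φ.comp f)

/-!
The new sequence splices the two given ones along `V`, and its exactness is a diagram chase.
Since `Hom(-, A)` is left exact, perfectness only asks that a functional `ψ` on `X` extend along
`X → Y ⊕ P`: extend `ψ` to `(Φ₁, Φ₂)` on `Y ⊕ U` by the second sequence, extend `Φ₂` to
`(Γ₁, Γ₂)` on `V ⊕ P` by the first, and take `(Φ₁ - Γ₁ ∘ w, -Γ₂)`.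
-/

namespace LinearMap

variable {R M₁ M₂ M₃ N : Type*} [Ring R] [AddCommGroup M₁] [AddCommGroup M₂] [AddCommGroup M₃]
  [AddCommGroup N] [Module R M₁] [Module R M₂] [Module R M₃] [Module R N]
  {f : M₁ →ₗ[R] M₂} {g : M₂ →ₗ[R] M₃}

-- `LinearMap.exact_lcomp_of_exact_of_surjective` needs `R` commutative.
theorem exact_precomp_of_exact_of_surjective (hfg : Function.Exact f g)
    (hg : Function.Surjective g) :
    Function.Exact (fun φ : M₃ →ₗ[R] N => φ ∘ₗ g) (fun φ : M₂ →ₗ[R] N => φ ∘ₗ f) := by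
  refine fun φ => ⟨fun hφ => ?_, ?_⟩
  · refine ⟨(range f).liftQ φ (range_le_ker_iff.mpr hφ) ∘ₗ
      (hfg.linearEquivOfSurjective hg).symm.toLinearMap, ?_⟩
    ext x
    simp
  · rintro ⟨ψ, rfl⟩
    simp only [comp_assoc, hfg.linearMap_comp_eq_zero, comp_zero]

end LinearMap

theorem isPerfectExactSeq_iff {A : Type} [Ring A] {X Y Z : Type}
    [AddCommGroup X] [AddCommGroup Y] [AddCommGroup Z]
    [Module Aᵐᵒᵖ X] [Module Aᵐᵒᵖ Y] [Module Aᵐᵒᵖ Z]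
    {f : X →ₗ[Aᵐᵒᵖ] Y} {g : Y →ₗ[Aᵐᵒᵖ] Z} :
    IsPerfectExactSeq A f g ↔
      IsShortExactSeq A f g ∧ Function.Surjective (fun φ : Y →ₗ[Aᵐᵒᵖ] A => φ ∘ₗ f) := by
  refine ⟨fun h => ⟨h.1, h.2.2.2⟩, fun ⟨h, hsurj⟩ => ⟨h, ?_, ?_, hsurj⟩⟩
  · exact fun φ ψ hφψ => (LinearMap.cancel_right h.2.2).mp hφψ
  · exact LinearMap.exact_precomp_of_exact_of_surjective h.2.1 h.2.2

section Snake

open LinearMap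

variable {R U V P Z X Y : Type*} [Ring R] [AddCommGroup U] [AddCommGroup V] [AddCommGroup P]
  [AddCommGroup Z] [AddCommGroup X] [AddCommGroup Y] [Module R U] [Module R V] [Module R P]
  [Module R Z] [Module R X] [Module R Y]
  {s : U →ₗ[R] V} {ι : U →ₗ[R] P} {t : V →ₗ[R] Z} {π : P →ₗ[R] Z}
  {f : X →ₗ[R] Y} {v : X →ₗ[R] U} {w : Y →ₗ[R] V}

theorem injective_prod_neg_comp (hsι : Function.Injective (s.prod ι))
    (hfv : Function.Injective (f.prod v)) (hc : ∀ x, w (f x) + s (v x) = 0) :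
    Function.Injective (f.prod (-(ι ∘ₗ v))) := by
  refine (injective_iff_map_eq_zero _).mpr fun x hx => ?_
  have hfx : f x = 0 := congr_arg Prod.fst hx
  have hιvx : ι (v x) = 0 := neg_eq_zero.mp (congr_arg Prod.snd hx)
  have hsvx : s (v x) = 0 := by simpa [hfx] using hc x
  have hvx : v x = 0 := (injective_iff_map_eq_zero _).mp hsι _ (Prod.ext hsvx hιvx)
  exact (injective_iff_map_eq_zero _).mp hfv _ (Prod.ext hfx hvx)

theorem exact_prod_neg_comp_coprod_comp (h₁ : Function.Exact (s.prod ι) (t.coprod π))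
    (h₂ : Function.Exact (f.prod v) (w.coprod s)) :
    Function.Exact (f.prod (-(ι ∘ₗ v))) ((t ∘ₗ w).coprod π) := by
  refine exact_of_comp_of_mem_range ?_ fun ⟨y, p⟩ hyp => ?_
  · ext x
    have hc₁ : t (s (v x)) + π (ι (v x)) = 0 := h₁.apply_apply_eq_zero (v x)
    have hc₂ : w (f x) + s (v x) = 0 := h₂.apply_apply_eq_zero x
    simp [eq_neg_of_add_eq_zero_left hc₂, ← neg_add, hc₁]
  · obtain ⟨u, hu⟩ := (h₁ (w y, p)).mp hyp
    have hsu : s u = w y := congr_arg Prod.fst hu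
    have hιu : ι u = p := congr_arg Prod.snd hu
    obtain ⟨x, hx⟩ := (h₂ (y, -u)).mp (by simp [hsu])
    have hfx : f x = y := congr_arg Prod.fst hx
    have hvx : v x = -u := congr_arg Prod.snd hx
    exact ⟨x, Prod.ext hfx (by simp [hvx, hιu])⟩

theorem surjective_coprod_comp (h₁ : Function.Surjective (t.coprod π))
    (h₂ : Function.Surjective (w.coprod s)) (hc : ∀ u, t (s u) + π (ι u) = 0) :
    Function.Surjective ((t ∘ₗ w).coprod π) := by
  intro z
  obtain ⟨⟨v', p⟩, rfl⟩ := h₁ z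
  obtain ⟨⟨y, u⟩, rfl⟩ := h₂ v'
  refine ⟨(y, p - ι u), ?_⟩
  simp only [coprod_apply, comp_apply, map_add, map_sub]
  rw [eq_neg_of_add_eq_zero_right (hc u)]
  abel

theorem surjective_precomp_prod_neg_comp {N : Type*} [AddCommGroup N] [Module R N]
    (h₁ : Function.Surjective fun φ : V × P →ₗ[R] N => φ ∘ₗ s.prod ι)
    (h₂ : Function.Surjective fun φ : Y × U →ₗ[R] N => φ ∘ₗ f.prod v)
    (hc : ∀ x, w (f x) + s (v x) = 0) :
    Function.Surjective fun φ : Y × P →ₗ[R] N => φ ∘ₗ f.prod (-(ι ∘ₗ v)) := by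
  intro ψ
  obtain ⟨Φ, rfl⟩ := h₂ ψ
  obtain ⟨Φ₁, Φ₂, rfl⟩ : ∃ Φ₁ Φ₂, coprod Φ₁ Φ₂ = Φ := ⟨_, _, Φ.coprod_comp_inl_inr⟩
  obtain ⟨Γ, hΓ⟩ := h₁ Φ₂
  obtain ⟨Γ₁, Γ₂, rfl⟩ : ∃ Γ₁ Γ₂, coprod Γ₁ Γ₂ = Γ := ⟨_, _, Γ.coprod_comp_inl_inr⟩
  refine ⟨(Φ₁ - Γ₁ ∘ₗ w).coprod (-Γ₂), ?_⟩
  ext x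
  have hΓx : Γ₁ (s (v x)) + Γ₂ (ι (v x)) = Φ₂ (v x) := congr($hΓ (v x))
  simp only [coprod_comp_prod, LinearMap.add_apply, LinearMap.sub_apply, LinearMap.comp_apply,
    LinearMap.neg_apply, map_neg, neg_neg]
  rw [eq_neg_of_add_eq_zero_left (hc x), map_neg, ← hΓx]
  abel

end Snake

theorem perfectExactSeq_snake_snd_general
    (A : Type) [Ring A]
    (U V P Z X Y : Type)
    [AddCommGroup U] [AddCommGroup V] [AddCommGroup P] [AddCommGroup Z]
    [AddCommGroup X] [AddCommGroup Y]
    [Module Aᵐᵒᵖ U] [Module Aᵐᵒᵖ V] [Module Aᵐᵒᵖ P] [Module Aᵐᵒᵖ Z]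
    [Module Aᵐᵒᵖ X] [Module Aᵐᵒᵖ Y]
    (s : U →ₗ[Aᵐᵒᵖ] V) (ι : U →ₗ[Aᵐᵒᵖ] P) (t : V →ₗ[Aᵐᵒᵖ] Z) (π : P →ₗ[Aᵐᵒᵖ] Z)
    (f : X →ₗ[Aᵐᵒᵖ] Y) (v : X →ₗ[Aᵐᵒᵖ] U) (w : Y →ₗ[Aᵐᵒᵖ] V)
    (h₁ : IsShortExactSeq A (s.prod ι) (t.coprod π))
    (h₂ : IsShortExactSeq A (f.prod v) (w.coprod s)) :
    IsShortExactSeq A (f.prod (-(ι.comp v))) ((t.comp w).coprod π) ∧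
    (IsPerfectExactSeq A (s.prod ι) (t.coprod π) →
      IsPerfectExactSeq A (f.prod v) (w.coprod s) →
      IsPerfectExactSeq A (f.prod (-(ι.comp v))) ((t.comp w).coprod π)) := by
  obtain ⟨inj₁, ex₁, surj₁⟩ := h₁
  obtain ⟨inj₂, ex₂, surj₂⟩ := h₂
  have hses : IsShortExactSeq A (f.prod (-(ι.comp v))) ((t.comp w).coprod π) :=
    ⟨injective_prod_neg_comp inj₁ inj₂ ex₂.apply_apply_eq_zero,
      exact_prod_neg_comp_coprod_comp ex₁ ex₂,
      surjective_coprod_comp surj₁ surj₂ ex₁.apply_apply_eq_zero⟩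
  refine ⟨hses, fun hp₁ hp₂ => isPerfectExactSeq_iff.mpr ⟨hses, ?_⟩⟩
  exact surjective_precomp_prod_neg_comp (isPerfectExactSeq_iff.mp hp₁).2
    (isPerfectExactSeq_iff.mp hp₂).2 ex₂.apply_apply_eq_zero

/-- Snake construction: given short exact sequences
`0 → U → V ⊕ P → Z → 0` (maps `u ↦ (s u, ι u)` and `(v', p) ↦ t v' + π p`) and
`0 → X → Y ⊕ U → V → 0` (maps `x ↦ (f x, v x)` and `(y, u) ↦ w y + s u`)
of finitely generated right `A`-modules, the sequence
`0 → X → Y ⊕ P → Z → 0` with maps `x ↦ (f x, -ι (v x))` and `(y, p) ↦ t (w y) + π p`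
is short exact; moreover if the two given sequences are perfect exact,
then so is the new one. -/
theorem perfectExactSeq_snake_snd
    (k A : Type) [Field k] [Ring A] [Algebra k A] [FiniteDimensional k A]
    (U V P Z X Y : Type)
    [AddCommGroup U] [AddCommGroup V] [AddCommGroup P] [AddCommGroup Z]
    [AddCommGroup X] [AddCommGroup Y]
    [Module Aᵐᵒᵖ U] [Module Aᵐᵒᵖ V] [Module Aᵐᵒᵖ P] [Module Aᵐᵒᵖ Z]
    [Module Aᵐᵒᵖ X] [Module Aᵐᵒᵖ Y]
    [Module.Finite Aᵐᵒᵖ U] [Module.Finite Aᵐᵒᵖ V] [Module.Finite Aᵐᵒᵖ P]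
    [Module.Finite Aᵐᵒᵖ Z] [Module.Finite Aᵐᵒᵖ X] [Module.Finite Aᵐᵒᵖ Y]
    (s : U →ₗ[Aᵐᵒᵖ] V) (ι : U →ₗ[Aᵐᵒᵖ] P) (t : V →ₗ[Aᵐᵒᵖ] Z) (π : P →ₗ[Aᵐᵒᵖ] Z)
    (f : X →ₗ[Aᵐᵒᵖ] Y) (v : X →ₗ[Aᵐᵒᵖ] U) (w : Y →ₗ[Aᵐᵒᵖ] V)
    (h₁ : IsShortExactSeq A (s.prod ι) (t.coprod π))
    (h₂ : IsShortExactSeq A (f.prod v) (w.coprod s)) :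
    IsShortExactSeq A (f.prod (-(ι.comp v))) ((t.comp w).coprod π) ∧
    (IsPerfectExactSeq A (s.prod ι) (t.coprod π) →
      IsPerfectExactSeq A (f.prod v) (w.coprod s) →
      IsPerfectExactSeq A (f.prod (-(ι.comp v))) ((t.comp w).coprod π)) :=
  perfectExactSeq_snake_snd_general A U V P Z X Y s ι t π f v w h₁ h₂
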